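/- arXiv:2208.11800 — 4 statements merged into one kernel-verified Lean document; each statement's English description precedes it below -/
import Mathlib

section
/- For all natural numbers i, j, n with i ≤ n and j ≤ n, one has Σ_{t=0}^{n} 3^t · C(n,t) · P(i, t, n) · P(j, t, n) = 4^n · 3^i · C(n,i) if i = j, and Σ_{t=0}^{n} 3^t · C(n,t) · P(i, t, n) · P(j, t, n) = 0 if i ≠ j. -/
open Finset Filter Topology

/-- Krawtchouk polynomial (alphabet size q = 4) evaluated at integer points:
`P(i, t, n) = Σ_{j=0}^{i} (-1)^j · 3^{i-j} · C(t, j) · C(n-t, i-j)`. -/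
def K (i t n : ℕ) : ℤ :=
  ∑ j ∈ Finset.range (i + 1),
    (-1 : ℤ) ^ j * 3 ^ (i - j) * (t.choose j) * ((n - t).choose (i - j))

/-- Li–Xing coefficient `f_{t;n} = (Σ_{m=0}^{e} P(m, t, n))²` for correction radius `e`. -/
def fCoeff (e t n : ℕ) : ℤ := (∑ m ∈ Finset.range (e + 1), K m t n) ^ 2

/-- Li–Xing function `f(t; n) = Σ_{i=0}^{n} f_{i;n} · P(i, t, n)`. -/
def fVal (e t n : ℕ) : ℤ :=
  ∑ i ∈ Finset.range (n + 1), fCoeff e i n * K i t n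

section KrawAux

open Polynomial

private lemma coeff_lin_pow {R : Type*} [CommRing R] (a b : R) (n k : ℕ) :
    ((C a + C b * X) ^ n).coeff k = (n.choose k : R) * a ^ (n - k) * b ^ k := by
  rw [add_comm (C a) (C b * X), add_pow, finset_sum_coeff]
  have h : ∀ m ∈ Finset.range (n+1),
      ((C b * X) ^ m * C a ^ (n - m) * (n.choose m : R[X])).coeff k
        = if k = m then (n.choose k : R) * a ^ (n - k) * b ^ k else 0 := by
    intro m _
    rw [mul_pow, ← C_pow, ← C_pow, ← Polynomial.C_eq_natCast]
    have e : C (b ^ m) * X ^ m * C (a ^ (n - m)) * C ((n.choose m : R))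
        = C (b ^ m * a ^ (n - m) * (n.choose m : R)) * X ^ m := by
      rw [map_mul, map_mul]; ring
    rw [e, coeff_C_mul, coeff_X_pow]
    split_ifs with hk
    · subst hk; ring
    · simp
  rw [Finset.sum_congr rfl h, Finset.sum_ite_eq]
  split_ifs with hk
  · rfl
  · simp at hk
    rw [Nat.choose_eq_zero_of_lt hk]
    simp

lemma coeff_kraw {R : Type*} [CommRing R] (t m k : ℕ) :
    (((1 - X) ^ t * (1 + 3 * X) ^ m : R[X])).coeff k
      = ∑ j ∈ Finset.range (k + 1),
          (-1 : R) ^ j * 3 ^ (k - j) * (t.choose j) * (m.choose (k - j)) := by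
  have h1 : ((1 - X : R[X])) = C 1 + C (-1) * X := by simp; ring
  have h2 : ((1 + 3 * X : R[X])) = C 1 + C 3 * X := by
    rw [map_one, map_ofNat]
  rw [h1, h2, coeff_mul, Finset.Nat.sum_antidiagonal_eq_sum_range_succ_mk]
  refine Finset.sum_congr rfl fun j hj => ?_
  rw [coeff_lin_pow, coeff_lin_pow]
  ring

lemma coeff_kraw' {R : Type*} [CommRing R] (t n k : ℕ) :
    (((1 - X) ^ t * (1 + 3 * X) ^ (n - t) : R[X])).coeff k = ((K k t n : ℤ) : R) := by
  rw [coeff_kraw, K]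
  push_cast
  ring

noncomputable abbrev Qp (t m : ℕ) : Polynomial ℤ := (1 - X) ^ t * (1 + 3 * X) ^ m

lemma key (n : ℕ) :
    ∑ t ∈ Finset.range (n + 1),
        (C (C ((3 : ℤ) ^ t * (n.choose t)))) *
          (C (Qp t (n - t)) * ((1 - X) ^ t * (1 + 3 * X) ^ (n - t) : (Polynomial ℤ)[X]))
      = ∑ k ∈ Finset.range (n + 1),
          C (C ((4 : ℤ) ^ (n - k) * 12 ^ k * (n.choose k))) * (C ((X : Polynomial ℤ) ^ k) * X ^ k) := by
  set a : (Polynomial ℤ)[X] := C (3 * (1 - X)) * (1 - X) with ha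
  set b : (Polynomial ℤ)[X] := C (1 + 3 * X) * (1 + 3 * X) with hb
  have hL : ∀ t ∈ Finset.range (n + 1),
      (C (C ((3 : ℤ) ^ t * (n.choose t)))) *
          (C (Qp t (n - t)) * ((1 - X) ^ t * (1 + 3 * X) ^ (n - t) : (Polynomial ℤ)[X]))
        = a ^ t * b ^ (n - t) * (n.choose t : (Polynomial ℤ)[X]) := by
    intro t _
    simp only [ha, hb, Qp, mul_pow, map_mul, map_pow, map_one, map_sub, map_add,
      map_ofNat, map_natCast]
    ring
  have hab : a + b = 4 + 12 * C X * X := by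
    simp only [ha, hb, map_mul, map_one, map_sub, map_add, map_ofNat]
    ring
  have hR : ∀ k ∈ Finset.range (n + 1),
      C (C ((4 : ℤ) ^ (n - k) * 12 ^ k * (n.choose k))) * (C ((X : Polynomial ℤ) ^ k) * X ^ k)
        = (12 * C X * X) ^ k * (4 : (Polynomial ℤ)[X]) ^ (n - k) * (n.choose k : (Polynomial ℤ)[X]) := by
    intro k _
    simp only [map_mul, map_pow, map_ofNat, map_natCast]
    ring
  rw [Finset.sum_congr rfl hL, Finset.sum_congr rfl hR, ← add_pow, ← add_pow, hab,
    add_comm (4 : (Polynomial ℤ)[X])]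

lemma main_sum (i j n : ℕ) (hj : j ≤ n) :
    ∑ t ∈ Finset.range (n + 1), (3 : ℤ) ^ t * (n.choose t) * K i t n * K j t n
      = if i = j then 4 ^ (n - j) * 12 ^ j * (n.choose j) else 0 := by
  have h := congrArg (fun p => (Polynomial.coeff (Polynomial.coeff p j) i)) (key n)
  have hc : ∀ t : ℕ, ((1 - X) ^ t * (1 + 3 * X) ^ (n - t) : (Polynomial ℤ)[X]).coeff j
      = ((K j t n : ℤ) : Polynomial ℤ) := fun t => coeff_kraw' t n j
  have hq : ∀ t : ℕ, (Qp t (n - t)).coeff i = K i t n := by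
    intro t
    have := coeff_kraw' (R := ℤ) t n i
    simpa using this
  simp only [finset_sum_coeff] at h
  simp only [coeff_C_mul, hc, ← Polynomial.C_eq_intCast, coeff_mul_C, hq] at h
  simp only [coeff_X_pow, mul_ite, mul_one, mul_zero, apply_ite (fun p => Polynomial.coeff p i),
    coeff_zero, coeff_C_mul, Finset.sum_ite_eq, Finset.mem_range, Int.cast_id,
    Nat.lt_succ_iff, hj, if_true] at h
  rw [show (∑ t ∈ Finset.range (n + 1), (3 : ℤ) ^ t * (n.choose t) * K i t n * K j t n)
      = ∑ x ∈ Finset.range (n + 1), 3 ^ x * (n.choose x : ℤ) * (K i x n * K j x n) from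
    Finset.sum_congr rfl fun t _ => by ring, h]
  split_ifs with hij
  · subst hij; simp
  · simp


end KrawAux

/-- Orthogonality relation for Krawtchouk polynomials with respect to the weight
`3^t · C(n,t)`: the sum over `t = 0, …, n` of `3^t · C(n,t) · P(i,t,n) · P(j,t,n)`
equals `4^n · 3^i · C(n,i)` if `i = j`, and `0` if `i ≠ j`. -/
theorem krawtchouk_orthogonality (i j n : ℕ) (hi : i ≤ n) (hj : j ≤ n) :
    (i = j →
      ∑ t ∈ Finset.range (n + 1), (3 : ℤ) ^ t * (n.choose t) * K i t n * K j t n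
        = 4 ^ n * 3 ^ i * (n.choose i)) ∧
    (i ≠ j →
      ∑ t ∈ Finset.range (n + 1), (3 : ℤ) ^ t * (n.choose t) * K i t n * K j t n
        = 0) := by
  constructor
  · intro hij
    subst hij
    have h := main_sum i i n hi
    rw [if_pos rfl] at h
    push_cast at h
    rw [h, show (12 : ℤ) ^ i = 4 ^ i * 3 ^ i from by rw [← mul_pow]; norm_num]
    have h4 : (4 : ℤ) ^ (n - i) * 4 ^ i = 4 ^ n := by
      rw [← pow_add, Nat.sub_add_cancel hi]
    linear_combination ((3 : ℤ) ^ i * (n.choose i : ℤ)) * h4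
  · intro hij
    have h := main_sum i j n hj
    rw [if_neg hij] at h
    exact h
end

section
/- Let n, e, t be natural numbers with t ≤ n and 2e < t. Then Σ_{i=0}^{n} (Σ_{m=0}^{e} P(m, i, n))^2 · P(i, t, n) = 0. -/
open Finset Filter Topology

/-!
Realise the alphabet as the ring `ZMod 2 × ZMod 2` with the primitive character
`ψ a = (-1) ^ (a.1 + a.2)` and pick a word `y` of Hamming weight `t`. The generating function
`∑ₓ ψ (x ⬝ᵥ y) X ^ wt x = (1 - X) ^ wt y (1 + 3X) ^ (n - wt y)` identifies `P(i, t, n)` with the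
character sum of `x ↦ ψ (x ⬝ᵥ y)` over the Hamming sphere of radius `i`, so the sum in question
becomes `∑ₓ (∑_{wt u ≤ e} ψ (u ⬝ᵥ x)) ^ 2 ψ (x ⬝ᵥ y)`. Expanding the square and summing over `x`
first, orthogonality leaves `4 ^ n` times the number of pairs `u, v` in the ball of radius `e`
with `u + v + y = 0`; there are none, since `wt y > 2e ≥ wt u + wt v`.
-/

open Polynomial

lemma exists_hammingNorm_eq {ι β : Type*} [Fintype ι] [Zero β] [DecidableEq β] [Nontrivial β]
    {t : ℕ} (ht : t ≤ Fintype.card ι) : ∃ y : ι → β, hammingNorm y = t := by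
  obtain ⟨s, -, hs⟩ := exists_subset_card_eq (s := (univ : Finset ι)) ht
  obtain ⟨a, ha⟩ := exists_ne (0 : β)
  classical
  refine ⟨fun i => if i ∈ s then a else 0, ?_⟩
  simp [hammingNorm, ha, hs]

section Hamming

variable {ι : Type*} [Fintype ι] {β : ι → Type*} [∀ i, AddGroup (β i)] [∀ i, DecidableEq (β i)]

lemma hammingNorm_neg (x : ∀ i, β i) : hammingNorm (-x) = hammingNorm x :=
  hammingNorm_comp (fun _ => Neg.neg) (fun _ => neg_injective) (fun _ => neg_zero)

lemma hammingNorm_add_le (x y : ∀ i, β i) :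
    hammingNorm (x + y) ≤ hammingNorm x + hammingNorm y :=
  calc hammingNorm (x + y) = hammingDist (-x) y := by rw [hammingDist_eq_hammingNorm, neg_neg]
    _ ≤ hammingDist (-x) 0 + hammingDist 0 y := hammingDist_triangle ..
    _ = hammingNorm x + hammingNorm y := by
        rw [hammingDist_zero_right, hammingDist_zero_left, hammingNorm_neg]

end Hamming

namespace AddChar
variable {ι A M : Type*} [AddCommMonoid A] [CommMonoid M]

lemma map_sum_eq_prod (ψ : AddChar A M) (s : Finset ι) (f : ι → A) :
    ψ (∑ i ∈ s, f i) = ∏ i ∈ s, ψ (f i) :=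
  map_prod ψ.toMonoidHom (fun i => Multiplicative.ofAdd (f i)) s

end AddChar

section CharacterSums

variable {ι S R : Type*} [Fintype ι] [DecidableEq ι] [CommRing S] [Fintype S] [DecidableEq S]
  [CommRing R] [IsDomain R] {ψ : AddChar S R}

lemma AddChar.IsPrimitive.sum_apply_dotProduct (hψ : ψ.IsPrimitive) (w : ι → S) :
    ∑ x : ι → S, ψ (x ⬝ᵥ w) = if w = 0 then (Fintype.card S : R) ^ Fintype.card ι else 0 := by
  simp_rw [dotProduct, ψ.map_sum_eq_prod]
  rw [← Fintype.prod_sum fun i a => ψ (a * w i)]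
  simp_rw [AddChar.sum_mulShift _ hψ]
  split_ifs with hw
  · simp [hw]
  · obtain ⟨c, hc⟩ : ∃ c, w c ≠ 0 := Function.ne_iff.1 hw
    exact prod_eq_zero (mem_univ c) (by simp [hc])

lemma AddChar.IsPrimitive.sum_C_mul_ite_X (hψ : ψ.IsPrimitive) (b : S) :
    ∑ a : S, C (ψ (a * b)) * (if a = 0 then 1 else X) =
      if b = 0 then 1 + C ((Fintype.card S : R) - 1) * X else 1 - X :=
  calc _ = ∑ a : S, (C (ψ (a * b)) * X + if a = 0 then 1 - X else 0) :=
        sum_congr rfl fun a _ => by split_ifs with ha <;> simp [ha]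
    _ = C (∑ a : S, ψ (a * b)) * X + (1 - X) := by
        rw [sum_add_distrib, ← sum_mul, ← map_sum, sum_ite_eq' univ (0 : S), if_pos (mem_univ _)]
    _ = _ := by
        rw [AddChar.sum_mulShift _ hψ]
        split_ifs
        · simp only [map_sub, map_natCast, map_one]
          ring
        · simp only [Nat.cast_zero, map_zero, zero_mul, zero_add]

theorem AddChar.IsPrimitive.sum_C_mul_X_pow_hammingNorm (hψ : ψ.IsPrimitive) (y : ι → S) :
    ∑ x : ι → S, C (ψ (x ⬝ᵥ y)) * X ^ hammingNorm x =
      (1 - X) ^ hammingNorm y *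
        (1 + C ((Fintype.card S : R) - 1) * X) ^ (Fintype.card ι - hammingNorm y) := by
  have hX : ∀ x : ι → S, (X : R[X]) ^ hammingNorm x = ∏ i, if x i = 0 then 1 else X := by
    intro x
    rw [prod_ite, prod_const_one, one_mul, prod_const]
    rfl
  have hzero : #{i | y i = 0} = Fintype.card ι - hammingNorm y := by
    have := card_filter_add_card_filter_not (s := univ) fun i => y i = 0
    rw [card_univ] at this
    simp only [hammingNorm, ne_eq]
    omega
  simp_rw [dotProduct, ψ.map_sum_eq_prod, map_prod, hX, ← prod_mul_distrib]
  rw [← Fintype.prod_sum fun i a => C (ψ (a * y i)) * if a = 0 then 1 else X]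
  simp_rw [hψ.sum_C_mul_ite_X]
  rw [prod_ite, prod_const, prod_const, hzero, mul_comm]
  rfl

theorem AddChar.IsPrimitive.sum_sq_sum_ball_mul_eq_zero (hψ : ψ.IsPrimitive) {e : ℕ} {y : ι → S}
    (hy : 2 * e < hammingNorm y) :
    ∑ x : ι → S, (∑ u ∈ {u | hammingNorm u ≤ e}, ψ (u ⬝ᵥ x)) ^ 2 * ψ (x ⬝ᵥ y) = 0 := by
  have hne : ∀ u v : ι → S, hammingNorm u ≤ e → hammingNorm v ≤ e → u + v + y ≠ 0 := by
    intro u v hu hv h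
    have := hammingNorm_add_le u v
    rw [← neg_eq_of_add_eq_zero_right h, hammingNorm_neg] at hy
    omega
  have hmul : ∀ u v x : ι → S,
      ψ (u ⬝ᵥ x) * ψ (v ⬝ᵥ x) * ψ (x ⬝ᵥ y) = ψ (x ⬝ᵥ (u + v + y)) := by
    intro u v x
    rw [dotProduct_add, dotProduct_add, ψ.map_add_eq_mul, ψ.map_add_eq_mul,
      dotProduct_comm x u, dotProduct_comm x v]
  calc _ = ∑ x : ι → S, ∑ u ∈ {u | hammingNorm u ≤ e}, ∑ v ∈ {v | hammingNorm v ≤ e},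
        ψ (x ⬝ᵥ (u + v + y)) := by
        simp_rw [sq, sum_mul_sum, sum_mul, hmul]
    _ = ∑ u ∈ {u | hammingNorm u ≤ e}, ∑ v ∈ {v | hammingNorm v ≤ e},
        ∑ x : ι → S, ψ (x ⬝ᵥ (u + v + y)) := by
        rw [sum_comm]
        exact sum_congr rfl fun u _ => sum_comm
    _ = 0 := sum_eq_zero fun u hu => sum_eq_zero fun v hv => by
        rw [hψ.sum_apply_dotProduct, if_neg (hne u v (mem_filter.1 hu).2 (mem_filter.1 hv).2)]

end CharacterSums

lemma coeff_one_add_C_mul_X_pow {R : Type*} [CommRing R] (a : R) (m i : ℕ) :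
    ((1 + C a * X) ^ m).coeff i = m.choose i * a ^ i := by
  have : (1 + C a * X) ^ m = ((1 + X) ^ m).comp (C a * X) := by simp
  rw [this, comp_C_mul_X_coeff, coeff_one_add_X_pow]

lemma K_eq_coeff (i t n : ℕ) :
    K i t n = ((1 - X) ^ t * (1 + C 3 * X) ^ (n - t) : ℤ[X]).coeff i := by
  rw [show (1 - X : ℤ[X]) = 1 + C (-1) * X by simp [sub_eq_add_neg], coeff_mul,
    Nat.sum_antidiagonal_eq_sum_range_succ_mk, K]
  refine sum_congr rfl fun j _ => ?_
  rw [coeff_one_add_C_mul_X_pow, coeff_one_add_C_mul_X_pow]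
  ring

section Krawtchouk

variable {ι S : Type*} [Fintype ι] [DecidableEq ι] [CommRing S] [Fintype S] [DecidableEq S]
  {ψ : AddChar S ℤ}

lemma K_hammingNorm_eq_sum (hS : Fintype.card S = 4) (hψ : ψ.IsPrimitive) (i : ℕ) (y : ι → S) :
    K i (hammingNorm y) (Fintype.card ι) = ∑ x ∈ {x | hammingNorm x = i}, ψ (x ⬝ᵥ y) := by
  rw [K_eq_coeff, show (3 : ℤ) = (Fintype.card S : ℤ) - 1 by rw [hS]; norm_num,
    ← hψ.sum_C_mul_X_pow_hammingNorm, finsetSum_coeff, sum_filter]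
  simp_rw [coeff_C_mul_X_pow, eq_comm]

lemma sum_range_K_hammingNorm_eq_sum (hS : Fintype.card S = 4) (hψ : ψ.IsPrimitive) (e : ℕ)
    (x : ι → S) :
    ∑ m ∈ range (e + 1), K m (hammingNorm x) (Fintype.card ι) =
      ∑ u ∈ {u | hammingNorm u ≤ e}, ψ (u ⬝ᵥ x) := by
  simp_rw [K_hammingNorm_eq_sum hS hψ, sum_fiberwise_eq_sum_filter, mem_range, Nat.lt_succ_iff]

end Krawtchouk

def parityChar : AddChar (ZMod 2 × ZMod 2) ℤ where
  toFun a := (-1) ^ (a.1 + a.2).val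
  map_zero_eq_one' := rfl
  map_add_eq_mul' := by decide

lemma parityChar_isPrimitive : parityChar.IsPrimitive := fun a ha =>
  AddChar.ne_one_iff.2 (by revert a; decide)

/-- Li–Xing: `f(t; n) = 0` for `2e < t ≤ n`, i.e.
`Σ_{i=0}^{n} (Σ_{m=0}^{e} P(m,i,n))² · P(i,t,n) = 0`. -/
theorem liXing_f_vanishes (n e t : ℕ) (ht : t ≤ n) (het : 2 * e < t) :
    ∑ i ∈ Finset.range (n + 1),
        (∑ m ∈ Finset.range (e + 1), K m i n) ^ 2 * K i t n = 0 := by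
  obtain ⟨y, rfl⟩ : ∃ y : Fin n → ZMod 2 × ZMod 2, hammingNorm y = t :=
    exists_hammingNorm_eq (by simpa using ht)
  have hS : Fintype.card (ZMod 2 × ZMod 2) = 4 := rfl
  have hK := K_hammingNorm_eq_sum (ι := Fin n) hS parityChar_isPrimitive
  have hball := sum_range_K_hammingNorm_eq_sum (ι := Fin n) hS parityChar_isPrimitive e
  simp only [Fintype.card_fin] at hK hball
  have hmaps : ∀ x ∈ (univ : Finset (Fin n → ZMod 2 × ZMod 2)), hammingNorm x ∈ range (n + 1) :=
    fun x _ => mem_range_succ_iff.2 (hammingNorm_le_card_fintype.trans_eq (Fintype.card_fin n))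
  calc _ = ∑ x, (∑ m ∈ range (e + 1), K m (hammingNorm x) n) ^ 2 * parityChar (x ⬝ᵥ y) := by
        rw [← sum_fiberwise_of_maps_to hmaps]
        refine sum_congr rfl fun i _ => ?_
        rw [hK, mul_sum]
        exact sum_congr rfl fun x hx => by rw [(mem_filter.1 hx).2]
    _ = ∑ x, (∑ u ∈ {u | hammingNorm u ≤ e}, parityChar (u ⬝ᵥ x)) ^ 2 *
          parityChar (x ⬝ᵥ y) := by
        simp_rw [hball]
    _ = 0 := parityChar_isPrimitive.sum_sq_sum_ball_mul_eq_zero het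
end

section
/- Fix natural numbers t and e. Then, as n → ∞, the real sequence f_{t;n} / n^{2e} converges to (3^e / e!)^2, where f_{t;n} = (Σ_{m=0}^{e} P(m, t, n))^2. In particular f_{t;n} = (3^e/e!)^2 · n^{2e} + o(n^{2e}), and f_{t;n} > 0 for all sufficiently large n. -/
open Finset Filter Topology

lemma lim_linear (c : ℕ) : Tendsto (fun n : ℕ => ((n - c : ℕ) : ℝ) / n) atTop (𝓝 1) := by
  have h0 := tendsto_const_div_atTop_nhds_zero_nat (c : ℝ)
  have h1 : Tendsto (fun n : ℕ => 1 - (c : ℝ) / n) atTop (𝓝 1) := by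
    simpa using (tendsto_const_nhds (x := (1:ℝ)) (f := atTop)).sub h0
  refine h1.congr' ?_
  filter_upwards [eventually_ge_atTop c, eventually_ge_atTop 1] with n hn h1n
  have hn0 : (n : ℝ) ≠ 0 := by positivity
  rw [Nat.cast_sub hn]
  field_simp

lemma lim_choose_pow (a b : ℕ) :
    Tendsto (fun n : ℕ => ((n - a).choose b : ℝ) / (n : ℝ) ^ b) atTop
      (𝓝 (1 / (b.factorial : ℝ))) := by
  have hprod : Tendsto (fun n : ℕ => ∏ i ∈ Finset.range b, (((n - (a + i) : ℕ) : ℝ) / n))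
      atTop (𝓝 (∏ _i ∈ Finset.range b, (1:ℝ))) :=
    tendsto_finset_prod _ fun i _ => lim_linear (a + i)
  rw [Finset.prod_const_one] at hprod
  have h := hprod.const_mul (1 / (b.factorial : ℝ))
  rw [mul_one] at h
  refine h.congr' ?_
  filter_upwards [eventually_ge_atTop 1] with n hn
  have hn0 : (n : ℝ) ≠ 0 := by positivity
  have hb0 : (b.factorial : ℝ) ≠ 0 := by exact_mod_cast b.factorial_ne_zero
  have hdesc : ((n - a).descFactorial b : ℝ) = ∏ i ∈ Finset.range b, ((n - (a + i) : ℕ) : ℝ) := by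
    rw [Nat.descFactorial_eq_prod_range]
    push_cast
    refine Finset.prod_congr rfl fun i _ => ?_
    rw [Nat.sub_sub]
  have hch : ((n - a).descFactorial b : ℝ) = (b.factorial : ℝ) * ((n - a).choose b : ℝ) := by
    exact_mod_cast congrArg (Nat.cast : ℕ → ℝ) (Nat.descFactorial_eq_factorial_mul_choose (n - a) b)
  have : ((n - a).choose b : ℝ) = (∏ i ∈ Finset.range b, ((n - (a + i) : ℕ) : ℝ)) / b.factorial := by
    rw [← hdesc, hch]; field_simp
  rw [this, Finset.prod_div_distrib, Finset.prod_const, Finset.card_range]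
  ring

lemma lim_choose_e (t b e : ℕ) (hb : b ≤ e) :
    Tendsto (fun n : ℕ => ((n - t).choose b : ℝ) / (n : ℝ) ^ e) atTop
      (𝓝 (if b = e then 1 / (e.factorial : ℝ) else 0)) := by
  rcases eq_or_lt_of_le hb with rfl | hlt
  · simpa using lim_choose_pow t b
  · rw [if_neg hlt.ne]
    have hinv : Tendsto (fun n : ℕ => ((n : ℝ) ^ (e - b))⁻¹) atTop (𝓝 0) := by
      apply Tendsto.inv_tendsto_atTop
      exact (tendsto_pow_atTop (Nat.sub_ne_zero_of_lt hlt)).comp tendsto_natCast_atTop_atTop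
    have h := (lim_choose_pow t b).mul hinv
    rw [mul_zero] at h
    refine h.congr' ?_
    filter_upwards [eventually_ge_atTop 1] with n hn
    have hn0 : (n : ℝ) ≠ 0 := by positivity
    have : (n : ℝ) ^ e = (n : ℝ) ^ b * (n : ℝ) ^ (e - b) := by
      rw [← pow_add, Nat.add_sub_cancel' hb]
    rw [this]
    field_simp

/-- Large-`n` asymptotics of the Li–Xing coefficient: for fixed `t` and `e`,
`f_{t;n} / n^{2e} → (3^e / e!)²` as `n → ∞`; in particular `f_{t;n} > 0`
for all sufficiently large `n`. -/
theorem fCoeff_asymptotics (t e : ℕ) :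
    Filter.Tendsto (fun n : ℕ => (fCoeff e t n : ℝ) / (n : ℝ) ^ (2 * e))
      Filter.atTop (nhds (((3 : ℝ) ^ e / (e.factorial : ℝ)) ^ 2)) ∧
    ∀ᶠ n : ℕ in Filter.atTop, 0 < fCoeff e t n := by
  set c : ℕ → ℕ → ℝ := fun m j => (-1 : ℝ) ^ j * 3 ^ (m - j) * (t.choose j) with hc
  -- limit of the rescaled sum
  have hS : Tendsto (fun n : ℕ => ((∑ m ∈ Finset.range (e + 1), K m t n : ℤ) : ℝ) / (n : ℝ) ^ e)
      atTop (𝓝 ((3 : ℝ) ^ e / (e.factorial : ℝ))) := by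
    have hlim : Tendsto (fun n : ℕ => ∑ m ∈ Finset.range (e + 1), ∑ j ∈ Finset.range (m + 1),
        c m j * (((n - t).choose (m - j) : ℝ) / (n : ℝ) ^ e)) atTop
        (𝓝 (∑ m ∈ Finset.range (e + 1), ∑ j ∈ Finset.range (m + 1),
          c m j * (if m - j = e then 1 / (e.factorial : ℝ) else 0))) := by
      refine tendsto_finset_sum _ fun m hm => tendsto_finset_sum _ fun j hj => ?_
      refine Tendsto.const_mul _ (lim_choose_e t (m - j) e ?_)
      exact le_trans (Nat.sub_le m j) (Nat.lt_succ_iff.mp (Finset.mem_range.mp hm))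
    have hval : (∑ m ∈ Finset.range (e + 1), ∑ j ∈ Finset.range (m + 1),
        c m j * (if m - j = e then 1 / (e.factorial : ℝ) else 0))
        = (3 : ℝ) ^ e / (e.factorial : ℝ) := by
      rw [Finset.sum_eq_single e]
      · rw [Finset.sum_eq_single 0]
        · simp [hc, div_eq_mul_inv]
        · intro j hj hj0
          have hj1 : 1 ≤ j := Nat.one_le_iff_ne_zero.mpr hj0
          have hje : j ≤ e := Nat.lt_succ_iff.mp (Finset.mem_range.mp hj)
          have : e - j ≠ e := by omega
          simp [this]
        · intro h; exact absurd (Finset.mem_range.mpr (Nat.succ_pos e)) h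
      · intro m hm hme
        have hmlt : m < e := lt_of_le_of_ne (Nat.lt_succ_iff.mp (Finset.mem_range.mp hm)) hme
        refine Finset.sum_eq_zero fun j hj => ?_
        have : m - j ≠ e := by omega
        simp [this]
      · intro h; exact absurd (Finset.self_mem_range_succ e) h
    rw [hval] at hlim
    refine hlim.congr fun n => ?_
    simp only [K, hc]
    push_cast
    rw [Finset.sum_div]
    refine (Finset.sum_congr rfl fun m _ => ?_).symm
    rw [Finset.sum_div]
    exact Finset.sum_congr rfl fun j _ => by ring
  have hsq := hS.pow 2
  have hmain : Tendsto (fun n : ℕ => (fCoeff e t n : ℝ) / (n : ℝ) ^ (2 * e))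
      atTop (𝓝 (((3 : ℝ) ^ e / (e.factorial : ℝ)) ^ 2)) := by
    refine hsq.congr fun n => ?_
    rw [div_pow]
    simp only [fCoeff]
    push_cast
    rw [← pow_mul, mul_comm e 2]
  refine ⟨hmain, ?_⟩
  have hpos : (0 : ℝ) < ((3 : ℝ) ^ e / (e.factorial : ℝ)) ^ 2 := by
    have : (0 : ℝ) < (e.factorial : ℝ) := by exact_mod_cast e.factorial_pos
    positivity
  have hev := hmain.eventually (eventually_gt_nhds hpos)
  filter_upwards [hev, eventually_ge_atTop 1] with n hn h1n
  have hnpos : (0 : ℝ) < (n : ℝ) ^ (2 * e) := by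
    have : (0 : ℝ) < (n : ℝ) := by exact_mod_cast h1n
    positivity
  have : (0 : ℝ) < (fCoeff e t n : ℝ) := by
    by_contra h
    push_neg at h
    exact absurd hn (not_lt.mpr (div_nonpos_of_nonpos_of_nonneg h hnpos.le))
  exact_mod_cast this
end

section
/- Fix a natural number e. Then, as n → ∞, the real sequence f(0; n) / (4^n · n^e) converges to 3^e / e!, where f(t; n) = Σ_{i=0}^{n} (Σ_{m=0}^{e} P(m, i, n))^2 · P(i, t, n). -/
open Finset Filter Topology

/-!
`K i t n` is the coefficient of `X^i` in `(1 - X)^t (1 + 3X)^(n-t)`, and the binomial theorem gives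
`Σ_t 3^t C(n,t) (1-x)^t (1+3x)^(n-t) (1-y)^t (1+3y)^(n-t) = 4^n (1 + 3xy)^n`. Comparing the
coefficients of `x^m y^m'` yields the orthogonality relation
`Σ_t 3^t C(n,t) K m t n K m' t n = δ_{mm'} 4^n 3^m C(n,m)`. Since `K t 0 n = 3^t C(n,t)`, expanding
the square in `f(0; n)` gives `f(0; n) = 4^n Σ_{m ≤ e} 3^m C(n,m)`, and as `C(n,m) ~ n^m / m!` only
the term `m = e` survives division by `n^e`.
-/

open Polynomial Asymptotics

def krawtchoukGen {R : Type*} [CommRing R] (t n : ℕ) (x : R) : R :=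
  (1 - x) ^ t * (1 + 3 * x) ^ (n - t)

lemma coeff_one_add_C_mul_X_pow_s8 {R : Type*} [CommSemiring R] (r : R) (s k : ℕ) :
    ((1 + C r * X) ^ s).coeff k = r ^ k * s.choose k := by
  have : (1 + C r * X) ^ s = ((1 + X) ^ s).comp (C r * X) := by simp
  rw [this, comp_C_mul_X_coeff, coeff_one_add_X_pow, mul_comm]

lemma K_eq_coeff_s8 {R : Type*} [CommRing R] (i t n : ℕ) :
    (K i t n : R) = (krawtchoukGen t n (X : R[X])).coeff i := by
  rw [krawtchoukGen, show (1 - X : R[X]) = 1 + C (-1) * X by simp [sub_eq_add_neg],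
    ← map_ofNat C 3, coeff_mul, Nat.sum_antidiagonal_eq_sum_range_succ_mk, K]
  push_cast
  refine sum_congr rfl fun j _ => ?_
  simp only [coeff_one_add_C_mul_X_pow_s8]
  ring

lemma K_at_zero (i n : ℕ) : K i 0 n = 3 ^ i * n.choose i := by
  have h := K_eq_coeff_s8 (R := ℤ) i 0 n
  rwa [Int.cast_id, krawtchoukGen, pow_zero, one_mul, Nat.sub_zero, ← map_ofNat C 3,
    coeff_one_add_C_mul_X_pow_s8] at h

lemma sum_choose_mul_krawtchoukGen_mul {R : Type*} [CommRing R] (x y : R) (n : ℕ) :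
    ∑ i ∈ range (n + 1), 3 ^ i * n.choose i * (krawtchoukGen i n x * krawtchoukGen i n y) =
      4 ^ n * (1 + 3 * x * y) ^ n := by
  have : (4 : R) ^ n * (1 + 3 * x * y) ^ n =
      (3 * ((1 - x) * (1 - y)) + (1 + 3 * x) * (1 + 3 * y)) ^ n := by
    rw [← mul_pow]; ring
  rw [this, add_pow]
  refine sum_congr rfl fun i _ => ?_
  simp only [krawtchoukGen, mul_pow]
  ring

lemma K_orthogonal (m m' n : ℕ) :
    ∑ i ∈ range (n + 1), 3 ^ i * n.choose i * K m i n * K m' i n =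
      if m = m' then 4 ^ n * 3 ^ m * (n.choose m : ℤ) else 0 := by
  -- In `ℤ[X][X]` take `x := C X` (inner variable) and `y := X`, and read off the coefficient
  -- of `y^m' x^m`.
  have h := congrArg (fun p : ℤ[X][X] => (p.coeff m').coeff m)
    (sum_choose_mul_krawtchoukGen_mul (C X) X n)
  have lhs : ∀ i, (3 : ℤ[X][X]) ^ i * (n.choose i : ℤ[X][X]) *
      (krawtchoukGen i n (C X : ℤ[X][X]) * krawtchoukGen i n X) =
        C (C ((3 : ℤ) ^ i * n.choose i) * krawtchoukGen i n (X : ℤ[X])) * krawtchoukGen i n X := by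
    intro i
    simp only [krawtchoukGen, map_mul, map_pow, map_sub, map_add, map_one, map_natCast, map_ofNat]
    ring
  have rhs : (4 : ℤ[X][X]) ^ n * (1 + 3 * C X * X) ^ n =
      C (C (4 ^ n)) * (1 + C (C 3 * X) * X) ^ n := by
    simp only [map_pow, map_mul, map_ofNat, mul_assoc]
  simp only [lhs, rhs, finsetSum_coeff, coeff_C_mul, ← K_eq_coeff_s8, coeff_mul_intCast, Int.cast_id,
    coeff_one_add_C_mul_X_pow_s8, mul_pow, ← C_pow, coeff_mul_natCast, coeff_X_pow] at h
  rw [h]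
  split_ifs with hm <;> simp [hm, mul_assoc]

lemma fVal_zero_eq (e n : ℕ) :
    fVal e 0 n = 4 ^ n * ∑ m ∈ range (e + 1), 3 ^ m * (n.choose m : ℤ) := by
  calc fVal e 0 n
      = ∑ m ∈ range (e + 1), ∑ m' ∈ range (e + 1),
          ∑ i ∈ range (n + 1), 3 ^ i * n.choose i * K m i n * K m' i n := by
        simp only [fVal, fCoeff, K_at_zero, sq, sum_mul, mul_sum]
        rw [sum_comm]
        refine sum_congr rfl fun m _ => ?_
        rw [sum_comm]
        exact sum_congr rfl fun m' _ => sum_congr rfl fun i _ => by ring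
    _ = 4 ^ n * ∑ m ∈ range (e + 1), 3 ^ m * (n.choose m : ℤ) := by
        rw [mul_sum]
        refine sum_congr rfl fun m hm => ?_
        rw [sum_congr rfl fun m' _ => K_orthogonal m m' n, sum_ite_eq, if_pos hm, mul_assoc]

lemma tendsto_choose_div_pow_self (k : ℕ) :
    Tendsto (fun n : ℕ => (n.choose k : ℝ) / n ^ k) atTop (𝓝 (1 / k.factorial)) := by
  refine ((isEquivalent_choose k).div (IsEquivalent.refl (u := fun n : ℕ => (n : ℝ) ^ k))).symm
    |>.tendsto_nhds (tendsto_const_nhds.congr' ?_)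
  filter_upwards [eventually_ne_atTop 0] with n hn
  simp [field]

lemma tendsto_choose_div_pow_of_lt {m e : ℕ} (h : m < e) :
    Tendsto (fun n : ℕ => (n.choose m : ℝ) / n ^ e) atTop (𝓝 0) :=
  ((isTheta_choose m).isBigO.trans_isLittleO
    ((isLittleO_pow_pow_atTop_of_lt h).comp_tendsto tendsto_natCast_atTop_atTop)).tendsto_div_nhds_zero

lemma tendsto_sum_pow_mul_choose_div_pow (c : ℝ) (e : ℕ) :
    Tendsto (fun n : ℕ => (∑ m ∈ range (e + 1), c ^ m * n.choose m) / n ^ e) atTop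
      (𝓝 (c ^ e / e.factorial)) := by
  simp only [sum_range_succ, add_div, sum_div, mul_div_assoc]
  have lower := tendsto_finsetSum (range e) fun m hm =>
    (tendsto_choose_div_pow_of_lt (mem_range.1 hm)).const_mul (c ^ m)
  have top := (tendsto_choose_div_pow_self e).const_mul (c ^ e)
  simpa [div_eq_mul_inv] using lower.add top

/-- Large-`n` asymptotics of `f(0; n)`: for fixed `e`,
`f(0; n) / (4^n · n^e) → 3^e / e!` as `n → ∞`. -/
theorem fVal_zero_asymptotics (e : ℕ) :
    Filter.Tendsto (fun n : ℕ => (fVal e 0 n : ℝ) / ((4 : ℝ) ^ n * (n : ℝ) ^ e))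
      Filter.atTop (nhds ((3 : ℝ) ^ e / (e.factorial : ℝ))) := by
  refine (tendsto_sum_pow_mul_choose_div_pow 3 e).congr fun n => ?_
  push_cast [fVal_zero_eq]
  rw [mul_div_mul_left _ _ (pow_ne_zero n four_ne_zero)]
end
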